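/- arXiv:1709.07606 — 6 statements merged into one kernel-verified Lean document; each statement's English description precedes it below -/
import Mathlib

section
/- Let (G,P) be a quasi-lattice ordered group and suppose p₁, q₁, p₂, q₂ ∈ P satisfy p₁q₁⁻¹ = q₂p₂⁻¹ and q₁ ∨ p₂ < ∞ (i.e. q₁ and p₂ have a common upper bound). Then p₁q₁⁻¹(q₁ ∨ p₂) = p₁ ∨ q₂ and q₁⁻¹(q₁ ∨ p₂) = p₁⁻¹(p₁ ∨ q₂). -/
/-- `m` is the least upper bound of `x` and `y` in the left-invariant order on `G`
determined by the submonoid `P`. -/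
def QLub {G : Type*} [Group G] (P : Submonoid G) (x y m : G) : Prop :=
  x⁻¹ * m ∈ P ∧ y⁻¹ * m ∈ P ∧ ∀ u, x⁻¹ * u ∈ P → y⁻¹ * u ∈ P → m⁻¹ * u ∈ P

/-- if `p₁ q₁⁻¹ = q₂ p₂⁻¹` and `m = q₁ ∨ p₂` exists, then
`p₁ q₁⁻¹ (q₁ ∨ p₂) = p₁ ∨ q₂` and `q₁⁻¹ (q₁ ∨ p₂) = p₁⁻¹ (p₁ ∨ q₂)`. -/
theorem stmt3 {G : Type*} [Group G] (P : Submonoid G)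
    (hP : ∀ g : G, g ∈ P → g⁻¹ ∈ P → g = 1)
    (hQL : ∀ x y : G, (∃ u, x⁻¹ * u ∈ P ∧ y⁻¹ * u ∈ P) → ∃ m, QLub P x y m)
    (p₁ q₁ p₂ q₂ m : G) (hp₁ : p₁ ∈ P) (hq₁ : q₁ ∈ P) (hp₂ : p₂ ∈ P) (hq₂ : q₂ ∈ P)
    (hrel : p₁ * q₁⁻¹ = q₂ * p₂⁻¹) (hm : QLub P q₁ p₂ m) :
    QLub P p₁ q₂ (p₁ * q₁⁻¹ * m) ∧
      ∀ m', QLub P p₁ q₂ m' → q₁⁻¹ * m = p₁⁻¹ * m' := by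
  obtain ⟨h1, h2, h3⟩ := hm
  have key : QLub P p₁ q₂ (p₁ * q₁⁻¹ * m) := by
    refine ⟨?_, ?_, ?_⟩
    · have : p₁⁻¹ * (p₁ * q₁⁻¹ * m) = q₁⁻¹ * m := by group
      rw [this]; exact h1
    · have : q₂⁻¹ * (p₁ * q₁⁻¹ * m) = p₂⁻¹ * m := by
        rw [hrel]; group
      rw [this]; exact h2
    · intro u hu1 hu2
      have hv1 : q₁⁻¹ * (q₁ * p₁⁻¹ * u) ∈ P := by
        have : q₁⁻¹ * (q₁ * p₁⁻¹ * u) = p₁⁻¹ * u := by group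
        rw [this]; exact hu1
      have hv2 : p₂⁻¹ * (q₁ * p₁⁻¹ * u) ∈ P := by
        have hinv : q₁ * p₁⁻¹ = p₂ * q₂⁻¹ := by
          rw [show q₁ * p₁⁻¹ = (p₁ * q₁⁻¹)⁻¹ by group, hrel]; group
        have hrel' : p₂⁻¹ * (q₁ * p₁⁻¹) = q₂⁻¹ := by rw [hinv]; group
        rw [← mul_assoc, hrel']; exact hu2
      have := h3 _ hv1 hv2
      have heq : (p₁ * q₁⁻¹ * m)⁻¹ * u = m⁻¹ * (q₁ * p₁⁻¹ * u) := by group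
      rw [heq]; exact this
  refine ⟨key, fun m' hm' => ?_⟩
  obtain ⟨k1, k2, k3⟩ := key
  obtain ⟨l1, l2, l3⟩ := hm'
  have ha := k3 _ l1 l2
  have hb := l3 _ k1 k2
  have : (p₁ * q₁⁻¹ * m)⁻¹ * m' = 1 := by
    apply hP _ ha
    have : ((p₁ * q₁⁻¹ * m)⁻¹ * m')⁻¹ = m'⁻¹ * (p₁ * q₁⁻¹ * m) := by group
    rw [this]; exact hb
  have hmm : p₁ * q₁⁻¹ * m = m' := inv_mul_eq_one.mp this
  rw [← hmm]; group
end

section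
/- Let P be a monoid with a finite generating set S ⊆ P \ {e}, and let N : P → [1,∞) be a multiplicative map with η := min{N(s) : s ∈ S} > 1. Then for every β > (log |S|)/(log η), the sum ∑_{p ∈ P} N(p)^{-β} converges. -/
/-!
Every `p` is a product of `k` generators for some `k`, and then `N p ≥ η ^ k`. There are
`|S| ^ k` words of length `k`, so summing over words instead of elements bounds the series by
`∑ₖ (|S| η^{-β}) ^ k`, a geometric series whose ratio is `< 1` exactly when `β > log |S| / log η`.
-/

open Function

theorem Summable.of_comp_surjective {α β : Type*} {f : β → ℝ} {g : α → β} (hg : Surjective g)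
    (h : Summable (f ∘ g)) : Summable f := by
  simpa [comp_def, surjInv_eq hg] using h.comp_injective (injective_surjInv hg)

theorem List.summable_pow_length {α : Type*} [Fintype α] {r : ℝ} (hr : 0 ≤ r)
    (h : Fintype.card α * r < 1) : Summable fun l : List α => r ^ l.length := by
  suffices Summable fun x : (n : ℕ) × (Fin n → α) => r ^ x.1 by
    simpa [comp_def, List.equivSigmaTuple] using
      this.comp_injective List.equivSigmaTuple.injective
  refine (summable_sigma_of_nonneg fun _ => pow_nonneg hr _).2 ⟨fun _ => .of_finite, ?_⟩
  simpa [tsum_const, Fintype.card_fun, mul_pow] using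
    summable_geometric_of_lt_one (by positivity) h

theorem List.pow_length_le_prod_map {ι M : Type*} [Monoid M] (N : M →* ℝ) {η : ℝ} (hη : 0 ≤ η)
    (f : ι → M) (l : List ι) (h : ∀ i ∈ l, η ≤ N (f i)) : η ^ l.length ≤ N (l.map f).prod := by
  induction l with
  | nil => simp
  | cons a l ih =>
    simp only [List.mem_cons, forall_eq_or_imp] at h
    rw [List.length_cons, List.map_cons, List.prod_cons, map_mul, pow_succ']
    exact mul_le_mul h.1 (ih h.2) (by positivity) (hη.trans h.1)

theorem Submonoid.surjective_prod_map_val_of_closure_eq_top {M : Type*} [Monoid M] {S : Set M}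
    (hS : Submonoid.closure S = ⊤) : Surjective fun l : List S => (l.map Subtype.val).prod := by
  intro p
  obtain ⟨l, hlS, rfl⟩ := Submonoid.exists_list_of_mem_closure (hS ▸ Submonoid.mem_top p)
  exact ⟨l.pmap Subtype.mk hlS, by simp [List.map_pmap]⟩

theorem mul_rpow_neg_lt_one_of_log_div_log_lt {c η β : ℝ} (hc : 0 ≤ c) (hη : 1 < η)
    (hβ : Real.log c / Real.log η < β) : c * η ^ (-β) < 1 := by
  rcases hc.eq_or_lt with rfl | hc
  · simp
  have hlogη := Real.log_pos hη
  have hηβ : 0 < η ^ (-β) := Real.rpow_pos_of_pos (by linarith) _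
  rw [← Real.log_neg_iff (mul_pos hc hηβ), Real.log_mul hc.ne' hηβ.ne',
    Real.log_rpow (by linarith)]
  linarith [(div_lt_iff₀ hlogη).mp hβ]

theorem stmt6_general {P : Type*} [Monoid P] (S : Finset P)
    (hgen : Submonoid.closure (S : Set P) = ⊤)
    (N : P →* ℝ) (η : ℝ) (hη : 1 < η)
    (hηS : ∀ s ∈ S, η ≤ N s) (β : ℝ)
    (hβ : Real.log (S.card : ℝ) / Real.log η < β) :
    Summable fun p : P => (N p) ^ (-β) := by
  have hη0 : 0 < η := by linarith
  have hβ0 : 0 ≤ β := (div_nonneg (Real.log_natCast_nonneg _) (Real.log_pos hη).le).trans hβ.le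
  have hwords : Summable fun l : List S => (η ^ (-β)) ^ l.length :=
    List.summable_pow_length (Real.rpow_nonneg hη0.le _)
      (by simpa using mul_rpow_neg_lt_one_of_log_div_log_lt (Nat.cast_nonneg _) hη hβ)
  refine .of_comp_surjective (Submonoid.surjective_prod_map_val_of_closure_eq_top hgen) ?_
  have hlen (l : List S) : η ^ l.length ≤ N (l.map Subtype.val).prod :=
    List.pow_length_le_prod_map N hη0.le _ l fun s _ => hηS s s.2
  refine hwords.of_nonneg_of_le
    (fun l => Real.rpow_nonneg ((pow_nonneg hη0.le _).trans (hlen l)) _) fun l => ?_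
  calc N (l.map Subtype.val).prod ^ (-β) ≤ (η ^ l.length) ^ (-β) :=
        Real.rpow_le_rpow_of_nonpos (by positivity) (hlen l) (neg_nonpos.2 hβ0)
    _ = (η ^ (-β)) ^ l.length := by
        rw [← Real.rpow_natCast, ← Real.rpow_natCast, ← Real.rpow_mul hη0.le,
          ← Real.rpow_mul hη0.le, mul_comm]

/-- if `P` is generated by a finite set `S` of non-identity elements and
`η = min{N(s) : s ∈ S} > 1`, then `∑_{p∈P} N(p)^{-β}` converges for every
`β > log|S| / log η`. -/
theorem stmt6 {P : Type*} [Monoid P] (S : Finset P) (hS : ∀ s ∈ S, s ≠ 1)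
    (hgen : Submonoid.closure (S : Set P) = ⊤)
    (N : P →* ℝ) (hN : ∀ p, 1 ≤ N p) (η : ℝ) (hη : 1 < η)
    (hηS : ∀ s ∈ S, η ≤ N s) (β : ℝ)
    (hβ : Real.log (S.card : ℝ) / Real.log η < β) :
    Summable fun p : P => (N p) ^ (-β) :=
  stmt6_general S hgen N η hη hηS β hβ
end

section
/- Let (G,P) be a quasi-lattice ordered group with left regular representation L : P → B(ℓ²(P)) given by L_p ε_x = ε_{px}. Then for all p, q ∈ P: L_p L_p* L_q L_q* = L_{p∨q} L_{p∨q}* if p and q have a common upper bound, and L_p L_p* L_q L_q* = 0 otherwise. -/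
/-! The operator `L_p L_p*` is diagonal in the basis `(ε_y)`: it fixes `ε_y` for `y ∈ pP` and
kills it otherwise, because `L_p*` shifts `ε_{px}` back to `ε_x` and annihilates the basis
vectors outside the range of `L_p`. Hence `L_p L_p* L_q L_q*` is the diagonal projection onto
`pP ∩ qP`, and this set is `(p ∨ q)P` when `p ∨ q` exists and empty when `p` and `q` have no
common upper bound. -/

open ContinuousLinearMap Set

theorem lp.ext_single {𝕜 ι F : Type*} [RCLike 𝕜] [DecidableEq ι] [AddCommMonoid F]
    [Module 𝕜 F] [TopologicalSpace F] [T2Space F] {T S : lp (fun _ : ι => 𝕜) 2 →L[𝕜] F}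
    (h : ∀ i, T (lp.single 2 i 1) = S (lp.single 2 i 1)) : T = S :=
  lp.ext_continuousLinearMap ENNReal.ofNat_ne_top fun i => ext_ring (h i)

section ShiftOfBasis

variable {𝕜 ι κ : Type*} [RCLike 𝕜] [DecidableEq ι] [DecidableEq κ] {σ : ι → κ}
  {L : lp (fun _ : ι => 𝕜) 2 →L[𝕜] lp (fun _ : κ => 𝕜) 2}

theorem adjoint_apply_single_apply (hL : ∀ i, L (lp.single 2 i 1) = lp.single 2 (σ i) 1)
    (k : κ) (i : ι) : adjoint L (lp.single 2 k 1) i = if σ i = k then 1 else 0 :=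
  calc adjoint L (lp.single 2 k 1) i
      = inner 𝕜 (lp.single 2 i (1 : 𝕜)) (adjoint L (lp.single 2 k 1)) := by
        simp [lp.inner_single_left]
    _ = inner 𝕜 (L (lp.single 2 i 1)) (lp.single 2 k (1 : 𝕜)) := adjoint_inner_right _ _ _
    _ = if σ i = k then 1 else 0 := by simp [hL, lp.inner_single_left, Pi.single_apply]

theorem adjoint_apply_single_of_mem_range (hσ : σ.Injective)
    (hL : ∀ i, L (lp.single 2 i 1) = lp.single 2 (σ i) 1) (i : ι) :
    adjoint L (lp.single 2 (σ i) 1) = lp.single 2 i 1 := by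
  ext j
  simp [adjoint_apply_single_apply hL, Pi.single_apply, hσ.eq_iff]

theorem adjoint_apply_single_of_notMem_range
    (hL : ∀ i, L (lp.single 2 i 1) = lp.single 2 (σ i) 1) {k : κ} (hk : k ∉ range σ) :
    adjoint L (lp.single 2 k 1) = 0 := by
  ext j
  simpa [adjoint_apply_single_apply hL] using fun h => hk ⟨j, h⟩

theorem comp_adjoint_apply_single (hσ : σ.Injective)
    (hL : ∀ i, L (lp.single 2 i 1) = lp.single 2 (σ i) 1) (k : κ) :
    (L ∘L adjoint L) (lp.single 2 k 1) = (range σ).indicator (lp.single 2 · 1) k := by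
  by_cases hk : k ∈ range σ
  · obtain ⟨i, rfl⟩ := hk
    rw [indicator_of_mem (mem_range_self i), comp_apply,
      adjoint_apply_single_of_mem_range hσ hL, hL]
  · rw [indicator_of_notMem hk, comp_apply, adjoint_apply_single_of_notMem_range hL hk,
      map_zero]

end ShiftOfBasis

theorem comp_adjoint_mul_comp_adjoint_apply_single {𝕜 ι₁ ι₂ κ : Type*} [RCLike 𝕜]
    [DecidableEq ι₁] [DecidableEq ι₂] [DecidableEq κ] {σ₁ : ι₁ → κ} {σ₂ : ι₂ → κ}
    {L₁ : lp (fun _ : ι₁ => 𝕜) 2 →L[𝕜] lp (fun _ : κ => 𝕜) 2}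
    {L₂ : lp (fun _ : ι₂ => 𝕜) 2 →L[𝕜] lp (fun _ : κ => 𝕜) 2}
    (hσ₁ : σ₁.Injective) (hL₁ : ∀ i, L₁ (lp.single 2 i 1) = lp.single 2 (σ₁ i) 1)
    (hσ₂ : σ₂.Injective) (hL₂ : ∀ i, L₂ (lp.single 2 i 1) = lp.single 2 (σ₂ i) 1) (k : κ) :
    (L₁ ∘L adjoint L₁ * (L₂ ∘L adjoint L₂)) (lp.single 2 k 1) =
      (range σ₁ ∩ range σ₂).indicator (lp.single 2 · 1) k := by
  rw [mul_apply_eq_comp, comp_adjoint_apply_single hσ₂ hL₂, inter_comm, ← indicator_indicator]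
  by_cases hk : k ∈ range σ₂
  · rw [indicator_of_mem hk, indicator_of_mem hk, comp_adjoint_apply_single hσ₁ hL₁]
  · rw [indicator_of_notMem hk, indicator_of_notMem hk, map_zero]

namespace Submonoid

variable {G : Type*} [Group G] {P : Submonoid G}

theorem mem_range_mul_left_iff (r y : P) :
    y ∈ range (r * · : P → P) ↔ (r : G)⁻¹ * y ∈ P :=
  ⟨by rintro ⟨x, rfl⟩; simp, fun h => ⟨⟨_, h⟩, Subtype.ext (by simp)⟩⟩

theorem range_mul_left_inter_range_mul_left_of_isLeast {p q m : P}
    (hm : (p : G)⁻¹ * m ∈ P ∧ (q : G)⁻¹ * m ∈ P ∧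
      ∀ u, (p : G)⁻¹ * u ∈ P → (q : G)⁻¹ * u ∈ P → (m : G)⁻¹ * u ∈ P) :
    range (p * · : P → P) ∩ range (q * ·) = range (m * ·) := by
  obtain ⟨hpm, hqm, hleast⟩ := hm
  ext y
  simp only [mem_inter_iff, mem_range_mul_left_iff]
  refine ⟨fun ⟨hp, hq⟩ => hleast y hp hq, fun hy => ⟨?_, ?_⟩⟩
  · simpa [mul_assoc] using mul_mem hpm hy
  · simpa [mul_assoc] using mul_mem hqm hy

theorem range_mul_left_inter_range_mul_left_eq_empty {p q : P}
    (h : ¬∃ u : G, (p : G)⁻¹ * u ∈ P ∧ (q : G)⁻¹ * u ∈ P) :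
    range (p * · : P → P) ∩ range (q * ·) = ∅ :=
  eq_empty_iff_forall_notMem.2 fun y ⟨hp, hq⟩ =>
    h ⟨y, (mem_range_mul_left_iff p y).1 hp, (mem_range_mul_left_iff q y).1 hq⟩

end Submonoid

theorem stmt11_general {G : Type*} [Group G] [DecidableEq G] (P : Submonoid G)
    (L : P → lp (fun _ : P => ℂ) 2 →L[ℂ] lp (fun _ : P => ℂ) 2)
    (hL : ∀ p x : P, L p (lp.single 2 x 1) = lp.single 2 (p * x) 1)
    (p q : P) :
    (∀ m : P, ((p : G)⁻¹ * m ∈ P ∧ (q : G)⁻¹ * m ∈ P ∧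
        ∀ u, (p : G)⁻¹ * u ∈ P → (q : G)⁻¹ * u ∈ P → (m : G)⁻¹ * u ∈ P) →
      L p * ContinuousLinearMap.adjoint (L p) * (L q * ContinuousLinearMap.adjoint (L q))
        = L m * ContinuousLinearMap.adjoint (L m)) ∧
    ((¬ ∃ u : G, (p : G)⁻¹ * u ∈ P ∧ (q : G)⁻¹ * u ∈ P) →
      L p * ContinuousLinearMap.adjoint (L p) * (L q * ContinuousLinearMap.adjoint (L q))
        = 0) := by
  have hσ (r : P) : (r * · : P → P).Injective := mul_right_injective r
  have hpq (y : P) :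
      (L p * adjoint (L p) * (L q * adjoint (L q))) (lp.single 2 y 1) =
        (range (p * · : P → P) ∩ range (q * ·)).indicator (lp.single 2 · 1) y :=
    comp_adjoint_mul_comp_adjoint_apply_single (hσ p) (hL p) (hσ q) (hL q) y
  refine ⟨fun m hm => lp.ext_single fun y => ?_, fun h => lp.ext_single fun y => ?_⟩
  · rw [hpq, Submonoid.range_mul_left_inter_range_mul_left_of_isLeast hm]
    exact (comp_adjoint_apply_single (hσ m) (hL m) y).symm
  · rw [hpq, Submonoid.range_mul_left_inter_range_mul_left_eq_empty h, indicator_empty,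
      zero_apply]

/-- Nica covariance for the left regular representation: for the
isometries `L_p ε_x = ε_{px}` on `ℓ²(P)`, we have
`L_p L_p* L_q L_q* = L_{p∨q} L_{p∨q}*` when `p ∨ q` exists, and `= 0` when `p` and `q`
have no common upper bound. -/
theorem stmt11 {G : Type*} [Group G] [DecidableEq G] (P : Submonoid G)
    (hP : ∀ g : G, g ∈ P → g⁻¹ ∈ P → g = 1)
    (hQL : ∀ x y : G, (∃ u, x⁻¹ * u ∈ P ∧ y⁻¹ * u ∈ P) →
      ∃ m, (x⁻¹ * m ∈ P ∧ y⁻¹ * m ∈ P) ∧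
        ∀ u, x⁻¹ * u ∈ P → y⁻¹ * u ∈ P → m⁻¹ * u ∈ P)
    (L : P → lp (fun _ : P => ℂ) 2 →L[ℂ] lp (fun _ : P => ℂ) 2)
    (hL : ∀ p x : P, L p (lp.single 2 x 1) = lp.single 2 (p * x) 1)
    (p q : P) :
    (∀ m : P, ((p : G)⁻¹ * m ∈ P ∧ (q : G)⁻¹ * m ∈ P ∧
        ∀ u, (p : G)⁻¹ * u ∈ P → (q : G)⁻¹ * u ∈ P → (m : G)⁻¹ * u ∈ P) →
      L p * ContinuousLinearMap.adjoint (L p) * (L q * ContinuousLinearMap.adjoint (L q))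
        = L m * ContinuousLinearMap.adjoint (L m)) ∧
    ((¬ ∃ u : G, (p : G)⁻¹ * u ∈ P ∧ (q : G)⁻¹ * u ∈ P) →
      L p * ContinuousLinearMap.adjoint (L p) * (L q * ContinuousLinearMap.adjoint (L q))
        = 0) :=
  stmt11_general P L hL p q
end

section
/- Let (G,P) be a quasi-lattice ordered group with left regular representation L on ℓ²(P). For p, q ∈ P with p ∨ q < ∞, we have L_p* L_q = L_{p⁻¹(p∨q)} L_{q⁻¹(p∨q)}*, and if p and q have no common upper bound then L_p* L_q = 0. -/
/-!
On basis vectors `L_r* ε_z = ε_{r⁻¹z}` when `r⁻¹z ∈ P` and `0` otherwise, so both sides of the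
identity send `ε_x` either to `ε_{p⁻¹qx}` or to `0`. They make the same choice because, for
`u = qx ∈ qP`, `u ∈ pP ↔ u ∈ (p ∨ q)P`; without common upper bounds `qx ∉ pP` for every `x`.
-/

open ContinuousLinearMap

namespace lp

variable {𝕜 ι κ : Type*} [RCLike 𝕜] [DecidableEq ι] [DecidableEq κ]

theorem ext_single_s12 {F : Type*} [NormedAddCommGroup F] [NormedSpace 𝕜 F]
    {T S : lp (fun _ : ι => 𝕜) 2 →L[𝕜] F}
    (h : ∀ i, T (lp.single 2 i 1) = S (lp.single 2 i 1)) : T = S :=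
  lp.ext_continuousLinearMap (by norm_num) fun i => ext_ring (h i)

variable {f : ι → κ} {T : lp (fun _ : ι => 𝕜) 2 →L[𝕜] lp (fun _ : κ => 𝕜) 2}

theorem adjoint_single_apply (hT : ∀ i, T (lp.single 2 i 1) = lp.single 2 (f i) 1)
    (j : κ) (i : ι) :
    adjoint T (lp.single 2 j 1) i = if f i = j then 1 else 0 := by
  have h := inner_single_left (𝕜 := 𝕜) i (1 : 𝕜) (adjoint T (lp.single 2 j 1))
  rw [adjoint_inner_right, hT, lp.inner_single_left, lp.single_apply] at h
  simpa [Pi.single_apply] using h.symm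

theorem adjoint_single_of_injective (hT : ∀ i, T (lp.single 2 i 1) = lp.single 2 (f i) 1)
    (hf : Function.Injective f) (i : ι) :
    adjoint T (lp.single 2 (f i) 1) = lp.single 2 i 1 := by
  ext k
  simp [adjoint_single_apply hT, hf.eq_iff, Pi.single_apply, eq_comm]

theorem adjoint_single_eq_zero (hT : ∀ i, T (lp.single 2 i 1) = lp.single 2 (f i) 1)
    {j : κ} (hj : j ∉ Set.range f) :
    adjoint T (lp.single 2 j 1) = 0 := by
  ext k
  simp only [adjoint_single_apply hT, lp.coeFn_zero, Pi.zero_apply]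
  exact if_neg fun h => hj ⟨k, h⟩

end lp

theorem Submonoid.inv_mul_mem_iff_of_isLeastUpperBound {G : Type*} [Group G]
    {P : Submonoid G} {p q m u : G} (hpm : p⁻¹ * m ∈ P)
    (hmax : ∀ u, p⁻¹ * u ∈ P → q⁻¹ * u ∈ P → m⁻¹ * u ∈ P) (hqu : q⁻¹ * u ∈ P) :
    p⁻¹ * u ∈ P ↔ m⁻¹ * u ∈ P := by
  refine ⟨fun hpu => hmax u hpu hqu, fun hmu => ?_⟩
  simpa [mul_assoc] using P.mul_mem hpm hmu

section LeftRegular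

variable {G : Type*} [Group G] [DecidableEq G] {P : Submonoid G}
  {L : P → lp (fun _ : P => ℂ) 2 →L[ℂ] lp (fun _ : P => ℂ) 2}

theorem adjoint_single_of_inv_mul_mem
    (hL : ∀ p x : P, L p (lp.single 2 x 1) = lp.single 2 (p * x) 1) {r z : P}
    (h : (r : G)⁻¹ * z ∈ P) :
    adjoint (L r) (lp.single 2 z 1) = lp.single 2 ⟨(r : G)⁻¹ * z, h⟩ 1 := by
  have hz : z = r * ⟨_, h⟩ := Subtype.ext (by simp)
  conv_lhs => rw [hz]
  exact lp.adjoint_single_of_injective (hL r) (mul_right_injective r) _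

theorem adjoint_single_of_inv_mul_notMem
    (hL : ∀ p x : P, L p (lp.single 2 x 1) = lp.single 2 (p * x) 1) {r z : P}
    (h : (r : G)⁻¹ * z ∉ P) :
    adjoint (L r) (lp.single 2 z 1) = 0 :=
  lp.adjoint_single_eq_zero (hL r) (by rintro ⟨w, rfl⟩; simp at h)

end LeftRegular

theorem stmt12_general {G : Type*} [Group G] [DecidableEq G] (P : Submonoid G)
    (L : P → lp (fun _ : P => ℂ) 2 →L[ℂ] lp (fun _ : P => ℂ) 2)
    (hL : ∀ p x : P, L p (lp.single 2 x 1) = lp.single 2 (p * x) 1)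
    (p q : P) :
    (∀ m a b : P,
      ((p : G)⁻¹ * m ∈ P ∧ (q : G)⁻¹ * m ∈ P ∧
        ∀ u, (p : G)⁻¹ * u ∈ P → (q : G)⁻¹ * u ∈ P → (m : G)⁻¹ * u ∈ P) →
      (a : G) = (p : G)⁻¹ * m → (b : G) = (q : G)⁻¹ * m →
      ContinuousLinearMap.adjoint (L p) * L q = L a * ContinuousLinearMap.adjoint (L b)) ∧
    ((¬ ∃ u : G, (p : G)⁻¹ * u ∈ P ∧ (q : G)⁻¹ * u ∈ P) →
      ContinuousLinearMap.adjoint (L p) * L q = 0) := by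
  constructor
  · rintro m a b ⟨hpm, -, hmax⟩ ha hb
    refine lp.ext_single_s12 fun x => ?_
    have hqx : (q : G)⁻¹ * (q * x : P) ∈ P := by simp
    have hbx : (b : G)⁻¹ * x = (m : G)⁻¹ * (q * x : P) := by simp [hb, mul_assoc]
    have hmem := Submonoid.inv_mul_mem_iff_of_isLeastUpperBound hpm hmax hqx
    rw [mul_apply_eq_comp, mul_apply_eq_comp, hL]
    by_cases h : (p : G)⁻¹ * (q * x : P) ∈ P
    · have h' : (b : G)⁻¹ * x ∈ P := hbx ▸ hmem.1 h
      rw [adjoint_single_of_inv_mul_mem hL h, adjoint_single_of_inv_mul_mem hL h', hL]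
      congr 1
      ext
      simp [ha, hbx, mul_assoc]
    · have h' : (b : G)⁻¹ * x ∉ P := hbx ▸ mt hmem.2 h
      rw [adjoint_single_of_inv_mul_notMem hL h, adjoint_single_of_inv_mul_notMem hL h',
        map_zero]
  · intro hno
    refine lp.ext_single_s12 fun x => ?_
    rw [mul_apply_eq_comp, hL, adjoint_single_of_inv_mul_notMem hL, zero_apply]
    exact fun h => hno ⟨q * x, h, by simp⟩

/-- for the left regular representation `L_p ε_x = ε_{px}` on `ℓ²(P)`:
if `m = p ∨ q` exists then `L_p* L_q = L_{p⁻¹(p∨q)} L_{q⁻¹(p∨q)}*`, and if `p, q` have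
no common upper bound then `L_p* L_q = 0`. -/
theorem stmt12 {G : Type*} [Group G] [DecidableEq G] (P : Submonoid G)
    (hP : ∀ g : G, g ∈ P → g⁻¹ ∈ P → g = 1)
    (hQL : ∀ x y : G, (∃ u, x⁻¹ * u ∈ P ∧ y⁻¹ * u ∈ P) →
      ∃ m, (x⁻¹ * m ∈ P ∧ y⁻¹ * m ∈ P) ∧
        ∀ u, x⁻¹ * u ∈ P → y⁻¹ * u ∈ P → m⁻¹ * u ∈ P)
    (L : P → lp (fun _ : P => ℂ) 2 →L[ℂ] lp (fun _ : P => ℂ) 2)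
    (hL : ∀ p x : P, L p (lp.single 2 x 1) = lp.single 2 (p * x) 1)
    (p q : P) :
    (∀ m a b : P,
      ((p : G)⁻¹ * m ∈ P ∧ (q : G)⁻¹ * m ∈ P ∧
        ∀ u, (p : G)⁻¹ * u ∈ P → (q : G)⁻¹ * u ∈ P → (m : G)⁻¹ * u ∈ P) →
      (a : G) = (p : G)⁻¹ * m → (b : G) = (q : G)⁻¹ * m →
      ContinuousLinearMap.adjoint (L p) * L q = L a * ContinuousLinearMap.adjoint (L b)) ∧
    ((¬ ∃ u : G, (p : G)⁻¹ * u ∈ P ∧ (q : G)⁻¹ * u ∈ P) →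
      ContinuousLinearMap.adjoint (L p) * L q = 0) :=
  stmt12_general P L hL p q
end

section
/- Let (G,P) be a quasi-lattice ordered group with finite set S of minimal elements of P \ {e}. Then the vacuum projection admits the clique expansion Q_e = ∑_{F ∈ cl(S)} (−1)^{|F|} L_{∨F} L_{∨F}*, where cl(S) is the set of subsets F of S admitting a least upper bound ∨F (with ∨∅ = e), and the sum is over all cliques. -/
/-!
The operator `L_p L_p*` is the projection onto the closed span of `{ε_y : p ≤ y}`, so on `ε_x`
the sum `∑_{F ∈ cl(S)} (-1)^{|F|} L_{∨F} L_{∨F}*` acts as the scalar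
`∑ (-1)^{|F|}` over the cliques `F` with `∨F ≤ x`. These are exactly the subsets of
`T = {s ∈ S : s ≤ x}` (every such subset is a clique, bounded by `x`), so the scalar is
`∑_{F ⊆ T} (-1)^{|F|}`, which is `1` if `T = ∅` and `0` otherwise. Finally `T = ∅` iff `x = e`:
no `s ∈ S` lies below `e` since `P ∩ P⁻¹ = {e}`, and every `x ≠ e` lies above some minimal `s`.
-/

open scoped Classical

section ShiftAdjoint

variable {𝕜 ι : Type*} [RCLike 𝕜] [DecidableEq ι]
  {L : lp (fun _ : ι => 𝕜) 2 →L[𝕜] lp (fun _ : ι => 𝕜) 2} {g : ι → ι}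

theorem lp.apply_eq_inner_single (f : lp (fun _ : ι => 𝕜) 2) (y : ι) :
    f y = inner 𝕜 (lp.single 2 y (1 : 𝕜)) f := by
  simp [lp.inner_single_left]

theorem adjoint_apply_of_apply_single (hL : ∀ y, L (lp.single 2 y 1) = lp.single 2 (g y) 1)
    (f : lp (fun _ : ι => 𝕜) 2) (y : ι) :
    (ContinuousLinearMap.adjoint L f) y = f (g y) := by
  rw [lp.apply_eq_inner_single, ContinuousLinearMap.adjoint_inner_right, hL,
    ← lp.apply_eq_inner_single]

theorem mul_adjoint_apply_single_of_apply_single (hg : Function.Injective g)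
    (hL : ∀ y, L (lp.single 2 y 1) = lp.single 2 (g y) 1) (x : ι) :
    (L * ContinuousLinearMap.adjoint L) (lp.single 2 x 1) =
      if x ∈ Set.range g then lp.single 2 x 1 else 0 := by
  rw [mul_apply_eq_comp]
  split_ifs with hx
  · obtain ⟨y₀, rfl⟩ := hx
    have : ContinuousLinearMap.adjoint L (lp.single 2 (g y₀) 1) = lp.single 2 y₀ 1 := by
      ext y
      simp [adjoint_apply_of_apply_single hL, lp.single_apply, Pi.single_apply, hg.eq_iff]
    rw [this, hL]
  · have : ContinuousLinearMap.adjoint L (lp.single 2 x 1) = 0 := by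
      ext y
      simp only [adjoint_apply_of_apply_single hL, lp.single_apply, lp.coeFn_zero,
        Pi.zero_apply]
      exact Pi.single_eq_of_ne (fun h => hx ⟨y, h⟩) _
    rw [this, map_zero]

theorem mul_adjoint_apply_single_eq_ite_dvd {M : Type*} [Monoid M] [IsLeftCancelMul M]
    [DecidableEq M] {L : lp (fun _ : M => 𝕜) 2 →L[𝕜] lp (fun _ : M => 𝕜) 2} {q : M}
    (hL : ∀ y, L (lp.single 2 y 1) = lp.single 2 (q * y) 1) (x : M) :
    (L * ContinuousLinearMap.adjoint L) (lp.single 2 x 1) =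
      if q ∣ x then lp.single 2 x 1 else 0 := by
  rw [mul_adjoint_apply_single_of_apply_single (mul_right_injective q) hL]
  simp only [Set.mem_range, Dvd.dvd, eq_comm]

end ShiftAdjoint

theorem Finset.sum_powerset_ite_subset_neg_one_pow {α R : Type*} [DecidableEq α] [Ring R]
    {S T : Finset α} (hT : T ⊆ S) :
    ∑ F ∈ S.powerset, (if F ⊆ T then (-1 : R) ^ F.card else 0) = if T = ∅ then 1 else 0 := by
  have := congrArg (Int.cast : ℤ → R) (Finset.sum_powerset_neg_one_pow_card (x := T))
  push_cast at this
  rw [← this, ← Finset.sum_filter]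
  congr 1
  ext F
  simp only [Finset.mem_filter, Finset.mem_powerset]
  exact ⟨fun h => h.2, fun h => ⟨h.trans hT, h⟩⟩

section QuasiLattice

variable {G : Type*} [Group G] {P : Submonoid G}

theorem Submonoid.dvd_iff_inv_mul_mem {p q : P} : p ∣ q ↔ (p : G)⁻¹ * q ∈ P := by
  constructor
  · rintro ⟨r, rfl⟩
    simp
  · intro h
    exact ⟨⟨_, h⟩, Subtype.ext (by simp)⟩

theorem Submonoid.eq_one_of_dvd_one (hP : ∀ g : G, g ∈ P → g⁻¹ ∈ P → g = 1) {p : P}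
    (hp : p ∣ 1) : p = 1 := by
  refine Subtype.ext (hP p p.2 ?_)
  simpa using Submonoid.dvd_iff_inv_mul_mem.mp hp

theorem filter_dvd_eq_empty_iff (hP : ∀ g : G, g ∈ P → g⁻¹ ∈ P → g = 1)
    {S : Finset P} (hS1 : ∀ s ∈ S, s ≠ 1) (hmin : ∀ p : P, p ≠ 1 → ∃ s ∈ S, ∃ r : P, s * r = p)
    (x : P) : S.filter (· ∣ x) = ∅ ↔ x = 1 := by
  refine ⟨fun hT => by_contra fun hx => ?_, fun hx => ?_⟩
  · obtain ⟨s, hs, r, hr⟩ := hmin x hx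
    exact (Finset.filter_eq_empty_iff.mp hT) hs ⟨r, hr.symm⟩
  · exact Finset.filter_eq_empty_iff.mpr fun s hs hsx =>
      hS1 s hs (Submonoid.eq_one_of_dvd_one hP (hx ▸ hsx))

theorem lub_dvd_iff_forall_dvd {S F : Finset P} {j : Finset P → P} (hj1 : j ∅ = 1)
    (hj : ∀ F ⊆ S, F.Nonempty → (∃ u : G, ∀ s ∈ F, (s : G)⁻¹ * u ∈ P) →
      (∀ s ∈ F, (s : G)⁻¹ * (j F : G) ∈ P) ∧
        ∀ u : G, (∀ s ∈ F, (s : G)⁻¹ * u ∈ P) → (j F : G)⁻¹ * u ∈ P)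
    (hFS : F ⊆ S) (hF : F = ∅ ∨ ∃ u : G, ∀ s ∈ F, (s : G)⁻¹ * u ∈ P) (x : P) :
    j F ∣ x ↔ ∀ s ∈ F, s ∣ x := by
  obtain rfl | hne := F.eq_empty_or_nonempty
  · simp [hj1]
  obtain ⟨hub, hleast⟩ := hj F hFS hne (hF.resolve_left hne.ne_empty)
  simp only [Submonoid.dvd_iff_inv_mul_mem] at hub ⊢
  refine ⟨fun h s hs => ?_, hleast x⟩
  simpa [mul_assoc] using P.mul_mem (hub s hs) h

end QuasiLattice

theorem stmt14_general {G : Type*} [Group G] [DecidableEq G] (P : Submonoid G)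
    (hP : ∀ g : G, g ∈ P → g⁻¹ ∈ P → g = 1)
    (L : P → lp (fun _ : P => ℂ) 2 →L[ℂ] lp (fun _ : P => ℂ) 2)
    (hL : ∀ p x : P, L p (lp.single 2 x 1) = lp.single 2 (p * x) 1)
    (S : Finset P) (hS1 : ∀ s ∈ S, s ≠ 1)
    (hmin : ∀ p : P, p ≠ 1 → ∃ s ∈ S, ∃ r : P, s * r = p)
    (j : Finset P → P) (hj1 : j ∅ = 1)
    (hj : ∀ F ⊆ S, F.Nonempty → (∃ u : G, ∀ s ∈ F, (s : G)⁻¹ * u ∈ P) →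
      (∀ s ∈ F, (s : G)⁻¹ * (j F : G) ∈ P) ∧
        ∀ u : G, (∀ s ∈ F, (s : G)⁻¹ * u ∈ P) → (j F : G)⁻¹ * u ∈ P) :
    ∀ x : P,
      (∑ F ∈ S.powerset,
        if F = ∅ ∨ ∃ u : G, ∀ s ∈ F, (s : G)⁻¹ * u ∈ P then
          ((-1 : ℂ) ^ F.card) •
            (L (j F) * ContinuousLinearMap.adjoint (L (j F)))
        else 0) (lp.single 2 x 1) =
      if x = 1 then lp.single 2 x (1 : ℂ) else 0 := by
  intro x
  set T := S.filter (· ∣ x)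
  have hterm : ∀ F ∈ S.powerset,
      (if F = ∅ ∨ ∃ u : G, ∀ s ∈ F, (s : G)⁻¹ * u ∈ P then
          ((-1 : ℂ) ^ F.card) • (L (j F) * ContinuousLinearMap.adjoint (L (j F)))
        else 0) (lp.single 2 x 1) =
        (if F ⊆ T then (-1 : ℂ) ^ F.card else 0) • lp.single 2 x 1 := by
    intro F hFS
    rw [Finset.mem_powerset] at hFS
    have hsubset : F ⊆ T ↔ ∀ s ∈ F, s ∣ x :=
      ⟨fun h s hs => (Finset.mem_filter.mp (h hs)).2,
        fun h s hs => Finset.mem_filter.mpr ⟨hFS hs, h s hs⟩⟩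
    by_cases hF : F = ∅ ∨ ∃ u : G, ∀ s ∈ F, (s : G)⁻¹ * u ∈ P
    · rw [if_pos hF, smul_apply, mul_adjoint_apply_single_eq_ite_dvd (hL _),
        lub_dvd_iff_forall_dvd hj1 hj hFS hF, ← hsubset]
      split_ifs <;> simp
    · have hnT : ¬ F ⊆ T := fun h => hF (Or.inr ⟨x, fun s hs =>
        Submonoid.dvd_iff_inv_mul_mem.mp (hsubset.mp h s hs)⟩)
      rw [if_neg hF, if_neg hnT, zero_apply, zero_smul]
  rw [sum_apply, Finset.sum_congr rfl hterm, ← Finset.sum_smul,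
    Finset.sum_powerset_ite_subset_neg_one_pow (Finset.filter_subset _ _)]
  simp only [filter_dvd_eq_empty_iff hP hS1 hmin, ite_smul, one_smul, zero_smul]

/-- clique expansion of the vacuum projection. With `S` the finite set of
minimal elements of `P \ {e}` and `j F = ∨F` the least upper bound of a clique `F`
(`j ∅ = e`), the projection `Q_e` onto `ℂ ε_e` equals
`∑_{F ∈ cl(S)} (−1)^{|F|} L_{∨F} L_{∨F}*`; equivalently this sum sends `ε_x` to itself
if `x = e` and to `0` otherwise. -/
theorem stmt14 {G : Type*} [Group G] [DecidableEq G] (P : Submonoid G)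
    (hP : ∀ g : G, g ∈ P → g⁻¹ ∈ P → g = 1)
    (hQL : ∀ x y : G, (∃ u, x⁻¹ * u ∈ P ∧ y⁻¹ * u ∈ P) →
      ∃ m, (x⁻¹ * m ∈ P ∧ y⁻¹ * m ∈ P) ∧
        ∀ u, x⁻¹ * u ∈ P → y⁻¹ * u ∈ P → m⁻¹ * u ∈ P)
    (L : P → lp (fun _ : P => ℂ) 2 →L[ℂ] lp (fun _ : P => ℂ) 2)
    (hL : ∀ p x : P, L p (lp.single 2 x 1) = lp.single 2 (p * x) 1)
    (S : Finset P) (hS1 : ∀ s ∈ S, s ≠ 1)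
    (hmin : ∀ p : P, p ≠ 1 → ∃ s ∈ S, ∃ r : P, s * r = p)
    (hminimal : ∀ s ∈ S, ∀ p : P, p ≠ 1 → (∃ r : P, p * r = s) → p = s)
    (j : Finset P → P) (hj1 : j ∅ = 1)
    (hj : ∀ F ⊆ S, F.Nonempty → (∃ u : G, ∀ s ∈ F, (s : G)⁻¹ * u ∈ P) →
      (∀ s ∈ F, (s : G)⁻¹ * (j F : G) ∈ P) ∧
        ∀ u : G, (∀ s ∈ F, (s : G)⁻¹ * u ∈ P) → (j F : G)⁻¹ * u ∈ P) :
    ∀ x : P,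
      (∑ F ∈ S.powerset,
        if F = ∅ ∨ ∃ u : G, ∀ s ∈ F, (s : G)⁻¹ * u ∈ P then
          ((-1 : ℂ) ^ F.card) •
            (L (j F) * ContinuousLinearMap.adjoint (L (j F)))
        else 0) (lp.single 2 x 1) =
      if x = 1 then lp.single 2 x (1 : ℂ) else 0 :=
  stmt14_general P hP L hL S hS1 hmin j hj1 hj
end

section
/- Let (G,P) be a quasi-lattice ordered group whose set S of minimal elements of P\{e} is finite, and let N : P → (1,∞) ∪ {1} be multiplicative with N(p)=1 iff p=e and with finite sublevel sets. For β strictly greater than the abscissa of convergence β_c, the inversion formula holds: (∑_{p∈P} N(p)^{-β}) · (∑_{F ∈ cl(S)} (−1)^{|F|} N(∨F)^{-β}) = 1. -/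
open scoped Classical

/-- inversion formula: for a quasi-lattice ordered group `(G,P)` with
finite set `S` of minimal elements of `P \ {e}`, `N : P → [1,∞)` multiplicative with
`N⁻¹(1) = {e}` and finite sublevel sets, and `β` strictly above the abscissa of
convergence `β_c`, one has
`(∑_{p∈P} N(p)^{-β}) · (∑_{F ∈ cl(S)} (−1)^{|F|} N(∨F)^{-β}) = 1`. -/
theorem stmt15 {G : Type*} [Group G] (P : Submonoid G)
    (hP : ∀ g : G, g ∈ P → g⁻¹ ∈ P → g = 1)
    (hQL : ∀ x y : G, (∃ u, x⁻¹ * u ∈ P ∧ y⁻¹ * u ∈ P) →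
      ∃ m, (x⁻¹ * m ∈ P ∧ y⁻¹ * m ∈ P) ∧
        ∀ u, x⁻¹ * u ∈ P → y⁻¹ * u ∈ P → m⁻¹ * u ∈ P)
    (N : P →* ℝ) (hN : ∀ p, 1 ≤ N p) (hN1 : ∀ p : P, N p = 1 → p = 1)
    (hfin : ∀ r : ℝ, 1 ≤ r → {p : P | N p ≤ r}.Finite)
    (S : Finset P) (hS1 : ∀ s ∈ S, s ≠ 1)
    (hmin : ∀ p : P, p ≠ 1 → ∃ s ∈ S, ∃ r : P, s * r = p)
    (hminimal : ∀ s ∈ S, ∀ p : P, p ≠ 1 → (∃ r : P, p * r = s) → p = s)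
    (j : Finset P → P) (hj1 : j ∅ = 1)
    (hj : ∀ F ⊆ S, F.Nonempty → (∃ u : G, ∀ s ∈ F, (s : G)⁻¹ * u ∈ P) →
      (∀ s ∈ F, (s : G)⁻¹ * (j F : G) ∈ P) ∧
        ∀ u : G, (∀ s ∈ F, (s : G)⁻¹ * u ∈ P) → (j F : G)⁻¹ * u ∈ P)
    (βc : ℝ)
    (hβc : IsGLB {β : ℝ | 0 < β ∧ Summable fun p : P => (N p) ^ (-β)} βc)
    (β : ℝ) (hβ : βc < β) :
    (∑' p : P, (N p) ^ (-β)) *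
      (∑ F ∈ S.powerset,
        if F = ∅ ∨ ∃ u : G, ∀ s ∈ F, (s : G)⁻¹ * u ∈ P then
          (-1 : ℝ) ^ F.card * (N (j F)) ^ (-β)
        else 0) = 1 := by
  have hNpos : ∀ p : P, (0 : ℝ) < N p := fun p => lt_of_lt_of_le one_pos (hN p)
  set f : P → ℝ := fun p => (N p) ^ (-β) with hf
  have hfnn : ∀ p, 0 ≤ f p := fun p => Real.rpow_nonneg (hNpos p).le _
  -- Summability of f
  obtain ⟨β', hβ'mem, hβ'lt⟩ :
      ∃ β' ∈ {β : ℝ | 0 < β ∧ Summable fun p : P => (N p) ^ (-β)}, β' < β := by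
    by_contra h
    push_neg at h
    exact absurd (hβc.2 fun x hx => h x hx) (not_le.2 hβ)
  have hsum : Summable f := by
    refine Summable.of_nonneg_of_le hfnn (fun p => ?_) hβ'mem.2
    exact Real.rpow_le_rpow_of_exponent_le (hN p) (by linarith)
  -- the condition on F
  set cond : Finset P → Prop :=
    fun F => F = ∅ ∨ ∃ u : G, ∀ s ∈ F, (s : G)⁻¹ * u ∈ P with hcond
  -- Key fact A
  have factA : ∀ F ∈ S.powerset, ∀ q : P,
      (cond F ∧ (j F : G)⁻¹ * (q : G) ∈ P) ↔
        F ⊆ S.filter (fun s => (s : G)⁻¹ * (q : G) ∈ P) := by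
    intro F hF q
    have hFS : F ⊆ S := Finset.mem_powerset.mp hF
    constructor
    · rintro ⟨hc, hle⟩
      rcases Finset.eq_empty_or_nonempty F with rfl | hne
      · simp
      · have hu : ∃ u : G, ∀ s ∈ F, (s : G)⁻¹ * u ∈ P := by
          rcases hc with h0 | hu
          · exact absurd h0 (Finset.nonempty_iff_ne_empty.mp hne)
          · exact hu
        obtain ⟨h1, _⟩ := hj F hFS hne hu
        intro s hs
        refine Finset.mem_filter.mpr ⟨hFS hs, ?_⟩
        have : ((s : G)⁻¹ * (j F : G)) * ((j F : G)⁻¹ * (q : G)) ∈ P :=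
          P.mul_mem (h1 s hs) hle
        simpa [mul_assoc] using this
    · intro hsub
      have hall : ∀ s ∈ F, (s : G)⁻¹ * (q : G) ∈ P := fun s hs =>
        (Finset.mem_filter.mp (hsub hs)).2
      rcases Finset.eq_empty_or_nonempty F with rfl | hne
      · exact ⟨Or.inl rfl, by simpa [hj1] using q.2⟩
      · refine ⟨Or.inr ⟨q, hall⟩, ?_⟩
        exact (hj F hFS hne ⟨q, hall⟩).2 q hall
  -- Key fact B
  have factB : ∀ q : P, (S.filter (fun s : P => (s : G)⁻¹ * (q : G) ∈ P)) = ∅ ↔ q = 1 := by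
    intro q
    constructor
    · intro h
      by_contra hq
      obtain ⟨s, hs, r, hsr⟩ := hmin q hq
      have : (s : G)⁻¹ * (q : G) ∈ P := by
        have : (s : G) * (r : G) = (q : G) := congrArg Subtype.val hsr
        rw [← this]
        simpa [mul_assoc] using r.2
      exact absurd (Finset.filter_eq_empty_iff.mp h hs) (not_not.mpr this)
    · rintro rfl
      refine Finset.filter_eq_empty_iff.mpr ?_
      intro s hs hmem
      have hsinv : (s : G)⁻¹ ∈ P := by simpa using hmem
      have : (s : G) = 1 := hP (s : G) s.2 hsinv
      exact hS1 s hs (Subtype.ext this)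
  -- step 1: rewrite each term of the finite sum as a tsum over q ≥ jF
  rw [Finset.mul_sum]
  have step1 : ∀ F ∈ S.powerset,
      (∑' p : P, f p) * (if cond F then (-1 : ℝ) ^ F.card * (N (j F)) ^ (-β) else 0)
        = ∑' q : P, (if cond F ∧ (j F : G)⁻¹ * (q : G) ∈ P
            then (-1 : ℝ) ^ F.card * f q else 0) := by
    intro F hF
    by_cases hc : cond F
    · simp only [hc, if_true, true_and]
      set e : P → P := fun p => j F * p with he
      have hinj : Function.Injective e := by
        intro a b hab
        have h2 : (j F : G) * (a : G) = (j F : G) * (b : G) := congrArg Subtype.val hab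
        exact Subtype.ext (mul_left_cancel h2)
      have hsupp : Function.support
          (fun q : P => if (j F : G)⁻¹ * (q : G) ∈ P then (-1 : ℝ) ^ F.card * f q else 0)
            ⊆ Set.range e := by
        intro q hq
        simp only [Function.mem_support] at hq
        by_cases hle : (j F : G)⁻¹ * (q : G) ∈ P
        · exact ⟨⟨_, hle⟩, Subtype.ext (by simp [he, mul_inv_cancel_left])⟩
        · simp [hle] at hq
      rw [← hinj.tsum_eq hsupp]
      have : ∀ p : P, (if (j F : G)⁻¹ * ((e p : P) : G) ∈ P
          then (-1 : ℝ) ^ F.card * f (e p) else 0)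
            = ((-1 : ℝ) ^ F.card * (N (j F)) ^ (-β)) * f p := by
        intro p
        have hmem : (j F : G)⁻¹ * ((e p : P) : G) ∈ P := by
          simpa [he, mul_assoc] using p.2
        rw [if_pos hmem]
        have : f (e p) = (N (j F)) ^ (-β) * f p := by
          simp only [hf, he, map_mul]
          rw [Real.mul_rpow (hNpos _).le (hNpos _).le]
        rw [this]; ring
      rw [tsum_congr this, tsum_mul_left]
      ring
    · simp [hc]
  rw [Finset.sum_congr rfl step1]
  -- step 2: swap the sums
  have hsummand : ∀ F ∈ S.powerset, Summable (fun q : P =>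
      if cond F ∧ (j F : G)⁻¹ * (q : G) ∈ P then (-1 : ℝ) ^ F.card * f q else 0) := by
    intro F _
    apply Summable.of_abs
    refine Summable.of_nonneg_of_le (fun q => abs_nonneg _) (fun q => ?_) hsum
    by_cases h : cond F ∧ (j F : G)⁻¹ * (q : G) ∈ P
    · simp [h, abs_mul, abs_of_nonneg (hfnn q)]
    · simp [h, hfnn q]
  rw [← Summable.tsum_finsetSum hsummand]
  -- step 3: pointwise evaluation of the inner finite sum
  have step3 : ∀ q : P,
      (∑ F ∈ S.powerset, if cond F ∧ (j F : G)⁻¹ * (q : G) ∈ P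
        then (-1 : ℝ) ^ F.card * f q else 0) = if q = 1 then f 1 else 0 := by
    intro q
    set Tq : Finset P := S.filter (fun s : P => (s : G)⁻¹ * (q : G) ∈ P) with hTq
    have hTqS : Tq ⊆ S := Finset.filter_subset _ _
    calc (∑ F ∈ S.powerset, if cond F ∧ (j F : G)⁻¹ * (q : G) ∈ P
            then (-1 : ℝ) ^ F.card * f q else 0)
        = ∑ F ∈ S.powerset, if F ⊆ Tq then (-1 : ℝ) ^ F.card * f q else 0 := by
          refine Finset.sum_congr rfl fun F hF => ?_
          rw [if_congr (factA F hF q) rfl rfl]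
      _ = ∑ F ∈ S.powerset.filter (· ⊆ Tq), (-1 : ℝ) ^ F.card * f q := by
          rw [Finset.sum_filter]
      _ = ∑ F ∈ Tq.powerset, (-1 : ℝ) ^ F.card * f q := by
          congr 1
          ext F
          simp only [Finset.mem_filter, Finset.mem_powerset]
          exact ⟨fun h => h.2, fun h => ⟨h.trans hTqS, h⟩⟩
      _ = (∑ F ∈ Tq.powerset, (-1 : ℝ) ^ F.card) * f q := by
          rw [Finset.sum_mul]
      _ = (if Tq = ∅ then 1 else 0) * f q := by
          congr 1
          have h := Finset.sum_powerset_neg_one_pow_card (x := Tq)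
          calc ∑ F ∈ Tq.powerset, (-1 : ℝ) ^ F.card
              = ((∑ F ∈ Tq.powerset, (-1 : ℤ) ^ F.card : ℤ) : ℝ) := by push_cast; rfl
            _ = (((if Tq = ∅ then 1 else 0) : ℤ) : ℝ) := by rw [h]
            _ = (if Tq = ∅ then 1 else 0) := by split <;> simp
      _ = if q = 1 then f 1 else 0 := by
          by_cases hq : q = 1
          · rw [if_pos ((factB q).mpr hq), if_pos hq, hq, one_mul]
          · rw [if_neg (fun h => hq ((factB q).mp h)), if_neg hq, zero_mul]
  rw [tsum_congr step3, tsum_ite_eq]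
  simp [hf]
end
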